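/- arXiv:1501.00793 — 3 statements merged into one kernel-verified Lean document; each statement's English description precedes it below -/
import Mathlib

section
/- Let a₃ ≠ 0 and a₃' ≠ 0 be real, set a = a₃ - a₃', and let λ₁,λ₃,λ₄ and λ̄₁,λ̄₃,λ̄₄ be positive reals. Suppose A,C,D : [0,∞) → (0,∞) are differentiable and satisfy dA/dt = C/A + 2, dC/dt = -C²/A², dD/dt = 4a₃² with A(0)=λ₁, C(0)=λ₃, D(0)=λ₄ and C(t) → c > 0 as t → ∞; suppose Ā,C̄ satisfy the same first two equations with Ā(0)=λ̄₁, C̄(0)=λ̄₃ and C̄(t) → c̄ > 0, while D̄ satisfies dD̄/dt = 4a₃'² with D̄(0)=λ̄₄. Then 2((A-Ā)/A)² + ((C-C̄)/C)² + ((D-D̄-a²C̄)/D)² + 2(aC̄)²/(CD) tends to 0 as t → ∞ if and only if a₃'² = a₃² and c̄ = c; in particular the quasi-convergence class [g] is exactly a 2-parameter family. -/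
open Set Filter Topology

/-!
`D` and `D̄` are affine with slopes `4a₃²` and `4a₃'²`. For the `(A, C)` system, `C` decreases,
so `u = A - 2t` is increasing with `(u²)' = 2uC/A ≤ 2C(0)`; hence `u = O(√t)` and `A(t)/t → 2`.
Therefore the first and last terms of the distance tend to `0`, while the second and third tend
to `((c - c̄)/c)²` and `((a₃² - a₃'²)/a₃²)²`, whose sum vanishes exactly when `c̄ = c` and
`a₃'² = a₃²`.
-/

theorem monotoneOn_Ici_of_hasDerivWithinAt_nonneg {f f' : ℝ → ℝ} {a : ℝ}
    (hf : ∀ t ∈ Ici a, HasDerivWithinAt f (f' t) (Ici a) t) (hf' : ∀ t ∈ Ioi a, 0 ≤ f' t) :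
    MonotoneOn f (Ici a) :=
  monotoneOn_of_hasDerivWithinAt_nonneg (convex_Ici a) (fun t ht => (hf t ht).continuousWithinAt)
    (fun t ht => by
      rw [interior_Ici] at ht ⊢
      exact (hf t (mem_Ici_of_Ioi ht)).mono Ioi_subset_Ici_self)
    (by simpa only [interior_Ici] using hf')

theorem antitoneOn_Ici_of_hasDerivWithinAt_nonpos {f f' : ℝ → ℝ} {a : ℝ}
    (hf : ∀ t ∈ Ici a, HasDerivWithinAt f (f' t) (Ici a) t) (hf' : ∀ t ∈ Ioi a, f' t ≤ 0) :
    AntitoneOn f (Ici a) := by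
  simpa using (monotoneOn_Ici_of_hasDerivWithinAt_nonneg (fun t ht => (hf t ht).neg)
    (fun t ht => neg_nonneg.2 (hf' t ht))).neg

theorem tendsto_div_id_of_hasDerivWithinAt_const {f : ℝ → ℝ} {k : ℝ}
    (hf : ∀ t ∈ Ici (0 : ℝ), HasDerivWithinAt f k (Ici 0) t) :
    Tendsto (fun t => f t / t) atTop (𝓝 k) := by
  have hlin : ∀ t ∈ Ici (0 : ℝ), f t = f 0 + k * t := by
    intro t ht
    have hcont : ContinuousOn f (Icc 0 t) := fun s hs =>
      (hf s hs.1).continuousWithinAt.mono Icc_subset_Ici_self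
    refine eq_of_has_deriv_right_eq (fun s hs => (hf s hs.1).mono (Ici_subset_Ici.2 hs.1))
      (fun s _ => ((hasDerivAt_id s).const_mul k).const_add (f 0) |>.hasDerivWithinAt
        |>.congr_deriv (mul_one k)) hcont (by fun_prop) (by simp) t ⟨ht, le_rfl⟩
  have hlim : Tendsto (fun t : ℝ => f 0 / t + k) atTop (𝓝 k) := by
    simpa using (tendsto_const_nhds.div_atTop tendsto_id).add_const k
  refine hlim.congr' ?_
  filter_upwards [eventually_gt_atTop 0] with t ht
  rw [hlin t ht.le, add_div, mul_div_cancel_right₀ k ht.ne']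

theorem tendsto_atTop_of_tendsto_div_id {f : ℝ → ℝ} {k : ℝ} (hk : 0 < k)
    (hf : Tendsto (fun t => f t / t) atTop (𝓝 k)) : Tendsto f atTop atTop :=
  (hf.pos_mul_atTop hk tendsto_id).congr' <| by
    filter_upwards [eventually_ne_atTop 0] with t ht
    exact div_mul_cancel₀ (f t) ht

theorem tendsto_sub_div_of_tendsto_div_id {f g : ℝ → ℝ} {x y : ℝ}
    (hf : Tendsto (fun t => f t / t) atTop (𝓝 x)) (hg : Tendsto (fun t => g t / t) atTop (𝓝 y))
    (hx : x ≠ 0) : Tendsto (fun t => (f t - g t) / f t) atTop (𝓝 ((x - y) / x)) :=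
  ((hf.sub hg).div hf hx).congr' <| by
    filter_upwards [eventually_ne_atTop 0] with t ht
    rw [Pi.div_apply, ← sub_div, div_div_div_cancel_right₀ ht]

theorem tendsto_div_id_zero_of_sq_le_linear {u : ℝ → ℝ} {p q : ℝ}
    (hu : ∀ᶠ t in atTop, 0 ≤ u t) (hsq : ∀ᶠ t in atTop, u t ^ 2 ≤ p + q * t) :
    Tendsto (fun t => u t / t) atTop (𝓝 0) := by
  have hbound : Tendsto (fun t : ℝ => √(p * t⁻¹ ^ 2 + q * t⁻¹)) atTop (𝓝 0) := by
    simpa using (((tendsto_inv_atTop_zero.pow 2).const_mul p).add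
      (tendsto_inv_atTop_zero.const_mul q)).sqrt
  refine tendsto_of_tendsto_of_tendsto_of_le_of_le' tendsto_const_nhds hbound ?_ ?_
  · filter_upwards [hu, eventually_gt_atTop 0] with t h0 ht using div_nonneg h0 ht.le
  · filter_upwards [hsq, eventually_gt_atTop 0] with t h ht
    refine Real.le_sqrt_of_sq_le ?_
    calc (u t / t) ^ 2 = u t ^ 2 / t ^ 2 := div_pow _ _ _
      _ ≤ (p + q * t) / t ^ 2 := by gcongr
      _ = p * t⁻¹ ^ 2 + q * t⁻¹ := by field_simp

theorem tendsto_div_id_two_of_hasDerivWithinAt {A C : ℝ → ℝ}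
    (hApos : ∀ t ∈ Ici (0 : ℝ), 0 < A t) (hCpos : ∀ t ∈ Ici (0 : ℝ), 0 < C t)
    (hA : ∀ t ∈ Ici (0 : ℝ), HasDerivWithinAt A (C t / A t + 2) (Ici 0) t)
    (hC : ∀ t ∈ Ici (0 : ℝ), HasDerivWithinAt C (-(C t) ^ 2 / (A t) ^ 2) (Ici 0) t) :
    Tendsto (fun t => A t / t) atTop (𝓝 2) := by
  let u : ℝ → ℝ := fun t => A t - 2 * t
  have hu : ∀ t ∈ Ici (0 : ℝ), HasDerivWithinAt u (C t / A t) (Ici 0) t := fun t ht =>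
    ((hA t ht).sub ((hasDerivAt_id' t).const_mul 2).hasDerivWithinAt).congr_deriv (by ring)
  have hCA : ∀ t ∈ Ici (0 : ℝ), 0 ≤ C t / A t := fun t ht => (div_pos (hCpos t ht) (hApos t ht)).le
  have hC_le : ∀ t ∈ Ici (0 : ℝ), C t ≤ C 0 := fun t ht =>
    antitoneOn_Ici_of_hasDerivWithinAt_nonpos hC
      (fun s _ => div_nonpos_of_nonpos_of_nonneg (neg_nonpos.2 (sq_nonneg _)) (sq_nonneg _))
      self_mem_Ici ht ht
  have hu_ge : ∀ t ∈ Ici (0 : ℝ), A 0 ≤ u t := fun t ht => by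
    simpa [u] using monotoneOn_Ici_of_hasDerivWithinAt_nonneg hu
      (fun s hs => hCA s (mem_Ici_of_Ioi hs)) self_mem_Ici ht ht
  have hu_sq : ∀ t ∈ Ici (0 : ℝ), u t ^ 2 ≤ A 0 ^ 2 + 2 * C 0 * t := by
    intro t ht
    have hanti := antitoneOn_Ici_of_hasDerivWithinAt_nonpos
      (f := fun t => u t ^ 2 - 2 * C 0 * t) (f' := fun t => 2 * u t * (C t / A t) - 2 * C 0)
      (fun s hs => (((hu s hs).pow 2).sub
        ((hasDerivAt_id' s).const_mul (2 * C 0)).hasDerivWithinAt).congr_deriv (by ring))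
      (fun s hs => by
        have hs' := mem_Ici_of_Ioi hs
        have : u s * (C s / A s) ≤ A s * (C s / A s) :=
          mul_le_mul_of_nonneg_right (by simp [u]; linarith [hs.out]) (hCA s hs')
        rw [mul_div_cancel₀ _ (hApos s hs').ne'] at this
        nlinarith [hC_le s hs'])
      self_mem_Ici ht ht
    simp only [u] at hanti
    linarith
  have hlim : Tendsto (fun t => u t / t + 2) atTop (𝓝 (0 + 2)) :=
    (tendsto_div_id_zero_of_sq_le_linear
      (eventually_ge_atTop 0 |>.mono fun t ht => (hApos 0 self_mem_Ici).le.trans (hu_ge t ht))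
      (eventually_ge_atTop 0 |>.mono hu_sq)).add_const 2
  rw [zero_add] at hlim
  refine hlim.congr' ?_
  filter_upwards [eventually_ne_atTop 0] with t ht
  field_simp
  ring

theorem sq_sub_div_add_sq_sub_div_eq_zero_iff {x x' y y' : ℝ} (hx : x ≠ 0) (hy : y ≠ 0) :
    ((x - x') / x) ^ 2 + ((y - y') / y) ^ 2 = 0 ↔ x' = x ∧ y' = y := by
  rw [add_eq_zero_iff_of_nonneg (sq_nonneg _) (sq_nonneg _)]
  simp [hx, hy, sub_eq_zero, eq_comm]

theorem stmt_16_general (a3 a3' : ℝ) (ha3 : a3 ≠ 0)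
    (a : ℝ)
    (A C D Ab Cb Db : ℝ → ℝ)
    (hApos : ∀ t ∈ Set.Ici (0:ℝ), 0 < A t) (hCpos : ∀ t ∈ Set.Ici (0:ℝ), 0 < C t)
    (hAbpos : ∀ t ∈ Set.Ici (0:ℝ), 0 < Ab t) (hCbpos : ∀ t ∈ Set.Ici (0:ℝ), 0 < Cb t)
    (hA : ∀ t ∈ Set.Ici (0:ℝ), HasDerivWithinAt A (C t / A t + 2) (Set.Ici 0) t)
    (hC : ∀ t ∈ Set.Ici (0:ℝ),
      HasDerivWithinAt C (-(C t) ^ 2 / (A t) ^ 2) (Set.Ici 0) t)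
    (hD : ∀ t ∈ Set.Ici (0:ℝ), HasDerivWithinAt D (4 * a3 ^ 2) (Set.Ici 0) t)
    (c : ℝ) (hc : 0 < c) (hClim : Filter.Tendsto C Filter.atTop (nhds c))
    (hAb : ∀ t ∈ Set.Ici (0:ℝ), HasDerivWithinAt Ab (Cb t / Ab t + 2) (Set.Ici 0) t)
    (hCb : ∀ t ∈ Set.Ici (0:ℝ),
      HasDerivWithinAt Cb (-(Cb t) ^ 2 / (Ab t) ^ 2) (Set.Ici 0) t)
    (hDb : ∀ t ∈ Set.Ici (0:ℝ), HasDerivWithinAt Db (4 * a3' ^ 2) (Set.Ici 0) t)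
    (cb : ℝ) (hCblim : Filter.Tendsto Cb Filter.atTop (nhds cb)) :
    Filter.Tendsto (fun t : ℝ =>
        2 * ((A t - Ab t) / A t) ^ 2 + ((C t - Cb t) / C t) ^ 2 +
        ((D t - Db t - a ^ 2 * Cb t) / D t) ^ 2 +
        2 * (a * Cb t) ^ 2 / (C t * D t))
      Filter.atTop (nhds 0) ↔ (a3' ^ 2 = a3 ^ 2 ∧ cb = c) := by
  have hslope : (0 : ℝ) < 4 * a3 ^ 2 := by positivity
  have hDt := tendsto_div_id_of_hasDerivWithinAt_const hD
  have hA_ratio := tendsto_sub_div_of_tendsto_div_id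
    (tendsto_div_id_two_of_hasDerivWithinAt hApos hCpos hA hC)
    (tendsto_div_id_two_of_hasDerivWithinAt hAbpos hCbpos hAb hCb) two_ne_zero
  have hC_ratio := (hClim.sub hCblim).div hClim hc.ne'
  have hDb_shift : Tendsto (fun t => (Db t + a ^ 2 * Cb t) / t) atTop (𝓝 (4 * a3' ^ 2)) := by
    simpa only [add_div, add_zero, id] using (tendsto_div_id_of_hasDerivWithinAt_const hDb).add
      ((hCblim.const_mul (a ^ 2)).div_atTop tendsto_id)
  have hD_ratio := tendsto_sub_div_of_tendsto_div_id hDt hDb_shift hslope.ne'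
  have hcross := (((hCblim.const_mul a).pow 2).const_mul 2).div_atTop
    (hClim.pos_mul_atTop hc (tendsto_atTop_of_tendsto_div_id hslope hDt))
  have hlim := (((hA_ratio.pow 2).const_mul 2).add (hC_ratio.pow 2)).add
    (hD_ratio.pow 2) |>.add hcross
  simp only [sub_sub]
  rw [show 2 * ((2 - 2) / 2) ^ 2 + ((c - cb) / c) ^ 2
      + ((4 * a3 ^ 2 - 4 * a3' ^ 2) / (4 * a3 ^ 2)) ^ 2 + 0
      = ((a3 ^ 2 - a3' ^ 2) / a3 ^ 2) ^ 2 + ((c - cb) / c) ^ 2 by ring] at hlim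
  rw [← sq_sub_div_add_sq_sub_div_eq_zero_iff (pow_ne_zero 2 ha3) hc.ne']
  exact ⟨tendsto_nhds_unique hlim, fun h => h ▸ hlim⟩

/-- class A9ii, different frames: quasi-convergence holds iff
`a₃'² = a₃²` and the limits of `C` and `C̄` agree; `[g]` is a 2-parameter
family. -/
theorem stmt_16 (a3 a3' : ℝ) (ha3 : a3 ≠ 0) (ha3' : a3' ≠ 0)
    (a : ℝ) (ha : a = a3 - a3')
    (l1 l3 l4 m1 m3 m4 : ℝ)
    (hl1 : 0 < l1) (hl3 : 0 < l3) (hl4 : 0 < l4)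
    (hm1 : 0 < m1) (hm3 : 0 < m3) (hm4 : 0 < m4)
    (A C D Ab Cb Db : ℝ → ℝ)
    (hApos : ∀ t ∈ Set.Ici (0:ℝ), 0 < A t) (hCpos : ∀ t ∈ Set.Ici (0:ℝ), 0 < C t)
    (hDpos : ∀ t ∈ Set.Ici (0:ℝ), 0 < D t)
    (hAbpos : ∀ t ∈ Set.Ici (0:ℝ), 0 < Ab t) (hCbpos : ∀ t ∈ Set.Ici (0:ℝ), 0 < Cb t)
    (hDbpos : ∀ t ∈ Set.Ici (0:ℝ), 0 < Db t)
    (hA : ∀ t ∈ Set.Ici (0:ℝ), HasDerivWithinAt A (C t / A t + 2) (Set.Ici 0) t)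
    (hC : ∀ t ∈ Set.Ici (0:ℝ),
      HasDerivWithinAt C (-(C t) ^ 2 / (A t) ^ 2) (Set.Ici 0) t)
    (hD : ∀ t ∈ Set.Ici (0:ℝ), HasDerivWithinAt D (4 * a3 ^ 2) (Set.Ici 0) t)
    (hA0 : A 0 = l1) (hC0 : C 0 = l3) (hD0 : D 0 = l4)
    (c : ℝ) (hc : 0 < c) (hClim : Filter.Tendsto C Filter.atTop (nhds c))
    (hAb : ∀ t ∈ Set.Ici (0:ℝ), HasDerivWithinAt Ab (Cb t / Ab t + 2) (Set.Ici 0) t)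
    (hCb : ∀ t ∈ Set.Ici (0:ℝ),
      HasDerivWithinAt Cb (-(Cb t) ^ 2 / (Ab t) ^ 2) (Set.Ici 0) t)
    (hDb : ∀ t ∈ Set.Ici (0:ℝ), HasDerivWithinAt Db (4 * a3' ^ 2) (Set.Ici 0) t)
    (hAb0 : Ab 0 = m1) (hCb0 : Cb 0 = m3) (hDb0 : Db 0 = m4)
    (cb : ℝ) (hcb : 0 < cb) (hCblim : Filter.Tendsto Cb Filter.atTop (nhds cb)) :
    Filter.Tendsto (fun t : ℝ =>
        2 * ((A t - Ab t) / A t) ^ 2 + ((C t - Cb t) / C t) ^ 2 +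
        ((D t - Db t - a ^ 2 * Cb t) / D t) ^ 2 +
        2 * (a * Cb t) ^ 2 / (C t * D t))
      Filter.atTop (nhds 0) ↔ (a3' ^ 2 = a3 ^ 2 ∧ cb = c) :=
  stmt_16_general a3 a3' ha3 a A C D Ab Cb Db hApos hCpos hAbpos hCbpos hA hC hD c hc hClim hAb hCb
    hDb cb hCblim
end

section
/- Let λ₁,λ₂,λ₃,λ₄ be positive reals and suppose A,B,C,D : [0,∞) → (0,∞) are differentiable and satisfy dA/dt = B/C + C/B + 2, dB/dt = C/A + D/C - B²/(AC), dC/dt = B/A + D/B - C²/(AB), dD/dt = -D²/(BC) with A(0)=λ₁, B(0)=λ₂, C(0)=λ₃, D(0)=λ₄. Then for all t ≥ 0: B(t)C(t)D(t)² = λ₂λ₃λ₄², A(t)D(t)(B(t)-C(t)) = λ₁λ₄(λ₂-λ₃), and D(t) = λ₄(1 + 3λ₄t/(λ₂λ₃))^{-1/3}. -/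
/-!
The products `B C D²` and `A D (B - C)` have zero derivative along the flow, so they are
constant. Feeding `B C D² = λ₂ λ₃ λ₄²` into `D' = -D² / (B C)` gives
`(D⁻³)' = 3 / (B C D²) = 3 / (λ₂ λ₃ λ₄²)`, so `D⁻³` is affine in `t`, and taking the positive
cube root yields the formula for `D`.
-/

open Set

theorem eq_add_mul_of_hasDerivWithinAt_Ici {f : ℝ → ℝ} {a c : ℝ}
    (hf : ∀ t ∈ Ici a, HasDerivWithinAt f c (Ici a) t) :
    ∀ t ∈ Ici a, f t = f a + c * (t - a) := by
  intro t ht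
  set g : ℝ → ℝ := fun s => f s - c * (s - a)
  have hg : ∀ s ∈ Ici a, HasDerivWithinAt g 0 (Ici a) s := fun s hs =>
    ((hf s hs).sub (((hasDerivWithinAt_id s _).sub_const a).const_mul c)).congr_deriv
      (by simp)
  have hconst := constant_of_has_deriv_right_zero
    (fun s hs => (hg s hs.1).continuousWithinAt.mono Icc_subset_Ici_self)
    (fun s hs => (hg s hs.1).mono (Ici_subset_Ici.mpr hs.1)) t (right_mem_Icc.mpr ht)
  simp only [g, sub_self, mul_zero, sub_zero] at hconst
  linarith

theorem eq_rpow_neg_one_div_three_of_inv_pow_three_eq {x p : ℝ} (hx : 0 < x)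
    (h : x⁻¹ ^ 3 = p) : x = p ^ (-(1:ℝ) / 3) := by
  rw [← h, ← Real.rpow_natCast, ← Real.rpow_mul (inv_nonneg.mpr hx.le)]
  norm_num [Real.rpow_neg_one]

structure IsA7iFlow (A B C D : ℝ → ℝ) : Prop where
  pos_A : ∀ t ∈ Ici (0:ℝ), 0 < A t
  pos_B : ∀ t ∈ Ici (0:ℝ), 0 < B t
  pos_C : ∀ t ∈ Ici (0:ℝ), 0 < C t
  pos_D : ∀ t ∈ Ici (0:ℝ), 0 < D t
  deriv_A : ∀ t ∈ Ici (0:ℝ), HasDerivWithinAt A (B t / C t + C t / B t + 2) (Ici 0) t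
  deriv_B : ∀ t ∈ Ici (0:ℝ),
    HasDerivWithinAt B (C t / A t + D t / C t - (B t) ^ 2 / (A t * C t)) (Ici 0) t
  deriv_C : ∀ t ∈ Ici (0:ℝ),
    HasDerivWithinAt C (B t / A t + D t / B t - (C t) ^ 2 / (A t * B t)) (Ici 0) t
  deriv_D : ∀ t ∈ Ici (0:ℝ), HasDerivWithinAt D (-(D t) ^ 2 / (B t * C t)) (Ici 0) t

namespace IsA7iFlow

variable {A B C D : ℝ → ℝ}

theorem hasDerivWithinAt_mul_mul_sq (h : IsA7iFlow A B C D) :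
    ∀ t ∈ Ici (0:ℝ), HasDerivWithinAt (fun s => B s * C s * D s ^ 2) 0 (Ici 0) t := by
  intro t ht
  have hB := (h.pos_B t ht).ne'
  have hC := (h.pos_C t ht).ne'
  refine (((h.deriv_B t ht).mul (h.deriv_C t ht)).mul ((h.deriv_D t ht).pow 2)).congr_deriv ?_
  simp only [Pi.mul_apply, Pi.pow_apply]
  field_simp
  ring

theorem hasDerivWithinAt_mul_mul_sub (h : IsA7iFlow A B C D) :
    ∀ t ∈ Ici (0:ℝ), HasDerivWithinAt (fun s => A s * D s * (B s - C s)) 0 (Ici 0) t := by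
  intro t ht
  have hA := (h.pos_A t ht).ne'
  have hB := (h.pos_B t ht).ne'
  have hC := (h.pos_C t ht).ne'
  refine (((h.deriv_A t ht).mul (h.deriv_D t ht)).mul
    ((h.deriv_B t ht).sub (h.deriv_C t ht))).congr_deriv ?_
  simp only [Pi.mul_apply, Pi.sub_apply]
  field_simp
  ring

theorem mul_mul_sq_eq (h : IsA7iFlow A B C D) :
    ∀ t ∈ Ici (0:ℝ), B t * C t * D t ^ 2 = B 0 * C 0 * D 0 ^ 2 := fun t ht => by
  simpa using eq_add_mul_of_hasDerivWithinAt_Ici h.hasDerivWithinAt_mul_mul_sq t ht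

theorem mul_mul_sub_eq (h : IsA7iFlow A B C D) :
    ∀ t ∈ Ici (0:ℝ), A t * D t * (B t - C t) = A 0 * D 0 * (B 0 - C 0) := fun t ht => by
  simpa using eq_add_mul_of_hasDerivWithinAt_Ici h.hasDerivWithinAt_mul_mul_sub t ht

theorem hasDerivWithinAt_inv_pow_three (h : IsA7iFlow A B C D) :
    ∀ t ∈ Ici (0:ℝ), HasDerivWithinAt (fun s => (D s)⁻¹ ^ 3)
      (3 / (B 0 * C 0 * D 0 ^ 2)) (Ici 0) t := by
  intro t ht
  have hB := (h.pos_B t ht).ne'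
  have hC := (h.pos_C t ht).ne'
  have hD := (h.pos_D t ht).ne'
  refine (((h.deriv_D t ht).inv hD).pow 3).congr_deriv ?_
  rw [← h.mul_mul_sq_eq t ht, Pi.inv_apply]
  norm_num
  field_simp

theorem D_eq (h : IsA7iFlow A B C D) :
    ∀ t ∈ Ici (0:ℝ), D t = D 0 * (1 + 3 * D 0 * t / (B 0 * C 0)) ^ (-(1:ℝ) / 3) := by
  intro t ht
  have hB0 := h.pos_B 0 self_mem_Ici
  have hC0 := h.pos_C 0 self_mem_Ici
  have hD0 := h.pos_D 0 self_mem_Ici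
  have hinv := eq_add_mul_of_hasDerivWithinAt_Ici h.hasDerivWithinAt_inv_pow_three t ht
  have hratio : (D t / D 0)⁻¹ ^ 3 = 1 + 3 * D 0 * t / (B 0 * C 0) := by
    rw [inv_div, div_pow, div_eq_mul_inv, ← inv_pow, hinv]
    field_simp
    ring
  rw [← eq_rpow_neg_one_div_three_of_inv_pow_three_eq (div_pos (h.pos_D t ht) hD0) hratio]
  field_simp

end IsA7iFlow

theorem stmt_18_general (l1 l2 l3 l4 : ℝ)
    (A B C D : ℝ → ℝ)
    (hApos : ∀ t ∈ Set.Ici (0:ℝ), 0 < A t) (hBpos : ∀ t ∈ Set.Ici (0:ℝ), 0 < B t)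
    (hCpos : ∀ t ∈ Set.Ici (0:ℝ), 0 < C t) (hDpos : ∀ t ∈ Set.Ici (0:ℝ), 0 < D t)
    (hA : ∀ t ∈ Set.Ici (0:ℝ),
      HasDerivWithinAt A (B t / C t + C t / B t + 2) (Set.Ici 0) t)
    (hB : ∀ t ∈ Set.Ici (0:ℝ),
      HasDerivWithinAt B (C t / A t + D t / C t - (B t) ^ 2 / (A t * C t)) (Set.Ici 0) t)
    (hC : ∀ t ∈ Set.Ici (0:ℝ),
      HasDerivWithinAt C (B t / A t + D t / B t - (C t) ^ 2 / (A t * B t)) (Set.Ici 0) t)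
    (hD : ∀ t ∈ Set.Ici (0:ℝ),
      HasDerivWithinAt D (-(D t) ^ 2 / (B t * C t)) (Set.Ici 0) t)
    (hA0 : A 0 = l1) (hB0 : B 0 = l2) (hC0 : C 0 = l3) (hD0 : D 0 = l4) :
    ∀ t ∈ Set.Ici (0:ℝ),
      B t * C t * (D t) ^ 2 = l2 * l3 * l4 ^ 2 ∧
      A t * D t * (B t - C t) = l1 * l4 * (l2 - l3) ∧
      D t = l4 * (1 + 3 * l4 * t / (l2 * l3)) ^ (-(1:ℝ)/3) := by
  have flow : IsA7iFlow A B C D := ⟨hApos, hBpos, hCpos, hDpos, hA, hB, hC, hD⟩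
  subst hA0 hB0 hC0 hD0
  exact fun t ht => ⟨flow.mul_mul_sq_eq t ht, flow.mul_mul_sub_eq t ht, flow.D_eq t ht⟩

/-- class A7i: conserved quantities `BCD²` and `AD(B-C)` of the
A7i Ricci-flow ODE system, and the explicit formula for `D`. -/
theorem stmt_18 (l1 l2 l3 l4 : ℝ)
    (hl1 : 0 < l1) (hl2 : 0 < l2) (hl3 : 0 < l3) (hl4 : 0 < l4)
    (A B C D : ℝ → ℝ)
    (hApos : ∀ t ∈ Set.Ici (0:ℝ), 0 < A t) (hBpos : ∀ t ∈ Set.Ici (0:ℝ), 0 < B t)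
    (hCpos : ∀ t ∈ Set.Ici (0:ℝ), 0 < C t) (hDpos : ∀ t ∈ Set.Ici (0:ℝ), 0 < D t)
    (hA : ∀ t ∈ Set.Ici (0:ℝ),
      HasDerivWithinAt A (B t / C t + C t / B t + 2) (Set.Ici 0) t)
    (hB : ∀ t ∈ Set.Ici (0:ℝ),
      HasDerivWithinAt B (C t / A t + D t / C t - (B t) ^ 2 / (A t * C t)) (Set.Ici 0) t)
    (hC : ∀ t ∈ Set.Ici (0:ℝ),
      HasDerivWithinAt C (B t / A t + D t / B t - (C t) ^ 2 / (A t * B t)) (Set.Ici 0) t)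
    (hD : ∀ t ∈ Set.Ici (0:ℝ),
      HasDerivWithinAt D (-(D t) ^ 2 / (B t * C t)) (Set.Ici 0) t)
    (hA0 : A 0 = l1) (hB0 : B 0 = l2) (hC0 : C 0 = l3) (hD0 : D 0 = l4) :
    ∀ t ∈ Set.Ici (0:ℝ),
      B t * C t * (D t) ^ 2 = l2 * l3 * l4 ^ 2 ∧
      A t * D t * (B t - C t) = l1 * l4 * (l2 - l3) ∧
      D t = l4 * (1 + 3 * l4 * t / (l2 * l3)) ^ (-(1:ℝ)/3) :=
  stmt_18_general l1 l2 l3 l4 A B C D hApos hBpos hCpos hDpos hA hB hC hD hA0 hB0 hC0 hD0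
end

section
/- Let λ₁,λ₃ be positive reals and suppose A,C : [0,∞) → (0,∞) are differentiable and satisfy dA/dt = C/A + 2 and dC/dt = -C²/A² with A(0)=λ₁, C(0)=λ₃. Then the quantity (A(t)+C(t))/(A(t)C(t)²) is constant in t, equal to c₁ = (λ₁+λ₃)/(λ₁λ₃²) > 0; equivalently C(t) = (1 + √(1 + 4c₁A(t)²))/(2c₁A(t)) for all t ≥ 0. Moreover A(t) → ∞ and C(t) → 1/√c₁ as t → ∞. -/
/-!
Along the flow the quantity `(A + C) / (A C²)` has zero derivative, so it stays equal to its
initial value `c₁`; solving the quadratic `c₁ A C² - C - A = 0` for its positive root gives `C`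
in terms of `A`. Since `dA/dt ≥ 2`, `A → ∞`, and the explicit formula then tends to `1 / √c₁`.
-/

open Set Filter Topology

lemma eq_of_hasDerivWithinAt_Ici_zero {f : ℝ → ℝ} {a t : ℝ}
    (hf : ∀ x ∈ Ici a, HasDerivWithinAt f 0 (Ici a) x) (ht : a ≤ t) : f t = f a :=
  constant_of_has_deriv_right_zero
    (fun x hx => (hf x hx.1).continuousWithinAt.mono Icc_subset_Ici_self)
    (fun x hx => (hf x hx.1).mono (Ici_subset_Ici.2 hx.1)) t ⟨ht, le_rfl⟩

lemma add_mul_sub_le_of_hasDerivWithinAt_Ici {f f' : ℝ → ℝ} {a m t : ℝ}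
    (hf : ∀ x ∈ Ici a, HasDerivWithinAt f (f' x) (Ici a) x) (hm : ∀ x ∈ Ici a, m ≤ f' x)
    (ht : a ≤ t) : f a + m * (t - a) ≤ f t := by
  have hg : ∀ x ∈ Ici a, HasDerivWithinAt (fun x => f x - m * x) (f' x - m) (Ici a) x :=
    fun x hx => by simpa using (hf x hx).fun_sub ((hasDerivWithinAt_id x _).const_mul m)
  have hmono : MonotoneOn (fun x => f x - m * x) (Ici a) := by
    refine monotoneOn_of_hasDerivWithinAt_nonneg (f' := fun x => f' x - m) (convex_Ici a)
      (fun x hx => (hg x hx).continuousWithinAt) (fun x hx => ?_) (fun x hx => ?_)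
    · rw [interior_Ici] at hx ⊢
      exact (hg x (Ioi_subset_Ici_self hx)).mono Ioi_subset_Ici_self
    · rw [interior_Ici] at hx
      exact sub_nonneg.2 (hm x (Ioi_subset_Ici_self hx))
  linarith [hmono self_mem_Ici ht ht]

lemma tendsto_atTop_of_hasDerivWithinAt_Ici {f f' : ℝ → ℝ} {a m : ℝ} (hm₀ : 0 < m)
    (hf : ∀ x ∈ Ici a, HasDerivWithinAt f (f' x) (Ici a) x) (hm : ∀ x ∈ Ici a, m ≤ f' x) :
    Tendsto f atTop atTop := by
  refine tendsto_atTop_mono' _ ?_ (tendsto_atTop_add_const_left atTop (f a)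
    ((tendsto_atTop_add_const_right _ (-a) tendsto_id).const_mul_atTop hm₀))
  filter_upwards [eventually_ge_atTop a] with t ht
  simpa [sub_eq_add_neg] using add_mul_sub_le_of_hasDerivWithinAt_Ici hf hm ht

lemma hasDerivWithinAt_add_div_mul_sq_zero {A C : ℝ → ℝ} {s : Set ℝ} {t : ℝ}
    (hAt : A t ≠ 0) (hCt : C t ≠ 0) (hA : HasDerivWithinAt A (C t / A t + 2) s t)
    (hC : HasDerivWithinAt C (-(C t) ^ 2 / (A t) ^ 2) s t) :
    HasDerivWithinAt (fun x => (A x + C x) / (A x * C x ^ 2)) 0 s t := by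
  refine ((hA.fun_add hC).fun_div (hA.fun_mul (hC.fun_pow 2))
    (mul_ne_zero hAt (pow_ne_zero 2 hCt))).congr_deriv ?_
  field_simp
  ring

lemma eq_one_add_sqrt_div_of_add_div_mul_sq_eq {a c k : ℝ} (ha : 0 < a) (hc : 0 < c)
    (h : (a + c) / (a * c ^ 2) = k) : c = (1 + √(1 + 4 * k * a ^ 2)) / (2 * k * a) := by
  have hk : k * a * c ^ 2 = a + c := by rw [← h]; field_simp
  have hroot : 2 * k * a * c - 1 = 2 * a / c + 1 := by
    field_simp
    linear_combination 2 * hk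
  have hsq : 1 + 4 * k * a ^ 2 = (2 * k * a * c - 1) ^ 2 := by
    linear_combination (-4 * k * a) * hk
  have hpos : 0 < 2 * k * a * c - 1 := by rw [hroot]; positivity
  have hk0 : 0 < k := h ▸ by positivity
  rw [hsq, Real.sqrt_sq hpos.le]
  field_simp
  ring

lemma tendsto_one_add_sqrt_div_atTop {k : ℝ} (hk : 0 < k) :
    Tendsto (fun x => (1 + √(1 + 4 * k * x ^ 2)) / (2 * k * x)) atTop (𝓝 (1 / √k)) := by
  have hu : Tendsto (fun x : ℝ => (2 * k * x)⁻¹) atTop (𝓝 0) :=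
    (tendsto_id.const_mul_atTop (by positivity)).inv_tendsto_atTop
  have hlim : Tendsto (fun x : ℝ => (2 * k * x)⁻¹ + √((2 * k * x)⁻¹ ^ 2 + 1 / k)) atTop
      (𝓝 (0 + √(0 ^ 2 + 1 / k))) :=
    hu.add ((hu.pow 2).add tendsto_const_nhds).sqrt
  rw [show (0 : ℝ) + √(0 ^ 2 + 1 / k) = 1 / √k by simp [Real.sqrt_inv]] at hlim
  refine hlim.congr' ?_
  filter_upwards [eventually_gt_atTop 0] with x hx
  have h2kx : 0 < 2 * k * x := by positivity
  rw [show (2 * k * x)⁻¹ ^ 2 + 1 / k = (1 + 4 * k * x ^ 2) / (2 * k * x) ^ 2 by field_simp; ring,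
    Real.sqrt_div' _ (sq_nonneg _), Real.sqrt_sq h2kx.le]
  ring

/-- class A9ii: the quantity `(A+C)/(AC²)` is a conserved
positive constant `c₁`, `C` is given explicitly in terms of `A` and `c₁`, and
`A → ∞`, `C → 1/√c₁` as `t → ∞`. -/
theorem stmt_19 (l1 l3 : ℝ) (hl1 : 0 < l1) (hl3 : 0 < l3)
    (A C : ℝ → ℝ)
    (hApos : ∀ t ∈ Set.Ici (0:ℝ), 0 < A t) (hCpos : ∀ t ∈ Set.Ici (0:ℝ), 0 < C t)
    (hA : ∀ t ∈ Set.Ici (0:ℝ), HasDerivWithinAt A (C t / A t + 2) (Set.Ici 0) t)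
    (hC : ∀ t ∈ Set.Ici (0:ℝ),
      HasDerivWithinAt C (-(C t) ^ 2 / (A t) ^ 2) (Set.Ici 0) t)
    (hA0 : A 0 = l1) (hC0 : C 0 = l3)
    (c1 : ℝ) (hc1 : c1 = (l1 + l3) / (l1 * l3 ^ 2)) :
    0 < c1 ∧
    (∀ t ∈ Set.Ici (0:ℝ), (A t + C t) / (A t * (C t) ^ 2) = c1) ∧
    (∀ t ∈ Set.Ici (0:ℝ),
      C t = (1 + Real.sqrt (1 + 4 * c1 * (A t) ^ 2)) / (2 * c1 * A t)) ∧
    Filter.Tendsto A Filter.atTop Filter.atTop ∧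
    Filter.Tendsto C Filter.atTop (nhds (1 / Real.sqrt c1)) := by
  have hc1pos : 0 < c1 := hc1 ▸ by positivity
  have hconserved : ∀ t ∈ Ici (0 : ℝ), (A t + C t) / (A t * C t ^ 2) = c1 := by
    intro t ht
    rw [hc1, ← hA0, ← hC0]
    exact eq_of_hasDerivWithinAt_Ici_zero (fun x hx => hasDerivWithinAt_add_div_mul_sq_zero
      (hApos x hx).ne' (hCpos x hx).ne' (hA x hx) (hC x hx)) ht
  have hformula : ∀ t ∈ Ici (0 : ℝ), C t = (1 + √(1 + 4 * c1 * A t ^ 2)) / (2 * c1 * A t) :=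
    fun t ht =>
      eq_one_add_sqrt_div_of_add_div_mul_sq_eq (hApos t ht) (hCpos t ht) (hconserved t ht)
  have hAtop : Tendsto A atTop atTop :=
    tendsto_atTop_of_hasDerivWithinAt_Ici two_pos hA fun t ht => by
      linarith [div_pos (hCpos t ht) (hApos t ht)]
  refine ⟨hc1pos, hconserved, hformula, hAtop, ?_⟩
  refine ((tendsto_one_add_sqrt_div_atTop hc1pos).comp hAtop).congr' ?_
  filter_upwards [eventually_ge_atTop 0] with t ht
  exact (hformula t ht).symm
end
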